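/- arXiv:2001.04823 — 15 statements merged into one kernel-verified Lean document; each statement's English description precedes it below -/
import Mathlib

section
/- Let A be a commutative ring and p a prime ideal of A. Then the pure part ν(p) is a purely-prime ideal of A, and ν(p) = ν(Ker π_p), where π_p : A → A_p is the canonical localization map. -/
/-! Pure ideals are closed under finite sums, so `ν(I)` is itself pure: it is the largest pure
ideal inside `I`. A pure ideal `I ≤ p` dies in `A_p`, because `f * (1 - g) = 0` with `g ∈ I ⊆ p`
makes `1 - g` a unit there; as also `Ker π_p ≤ p`, both ideals have the same pure part. That
`ν(p)` is purely-prime is inherited from the primality of `p`. -/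

variable {A : Type*} [CommRing A]

/-- An ideal `I` is pure if for every `f ∈ I` there exists `g ∈ I` with `f * (1 - g) = 0`. -/
def Ideal.IsPure (I : Ideal A) : Prop :=
  ∀ f ∈ I, ∃ g ∈ I, f * (1 - g) = 0

/-- The pure part `ν(I)`: the largest pure ideal contained in `I`
(the sum of all pure ideals contained in `I`). -/
def Ideal.purePart (I : Ideal A) : Ideal A :=
  sSup {J : Ideal A | J.IsPure ∧ J ≤ I}

/-- A purely-prime ideal: a proper pure ideal `P` such that whenever `I`, `J` are pure ideals
with `I * J ≤ P`, either `I ≤ P` or `J ≤ P`. -/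
def Ideal.IsPurelyPrime (P : Ideal A) : Prop :=
  P.IsPure ∧ P ≠ ⊤ ∧
    ∀ I J : Ideal A, I.IsPure → J.IsPure → I * J ≤ P → I ≤ P ∨ J ≤ P

/-- A purely-maximal ideal: a maximal element of the set of proper pure ideals. -/
def Ideal.IsPurelyMaximal (P : Ideal A) : Prop :=
  P.IsPure ∧ P ≠ ⊤ ∧
    ∀ Q : Ideal A, Q.IsPure → Q ≠ ⊤ → P ≤ Q → P = Q

/-- A Gelfand ring: every prime ideal is contained in a unique maximal ideal. -/
def IsGelfandRing (A : Type*) [CommRing A] : Prop :=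
  ∀ p : Ideal A, p.IsPrime → ∃! m : Ideal A, m.IsMaximal ∧ p ≤ m

/-- An mp-ring: every prime ideal contains a unique minimal prime ideal. -/
def IsMpRing (A : Type*) [CommRing A] : Prop :=
  ∀ p : Ideal A, p.IsPrime → ∃! q : Ideal A, q ∈ minimalPrimes A ∧ q ≤ p

/-- The kernel of the canonical map `A → A_p` to the localization at a prime `p`. -/
def Ideal.kerPi (p : Ideal A) (hp : p.IsPrime) : Ideal A :=
  letI := hp
  RingHom.ker (algebraMap A (Localization.AtPrime p))

/-- The unit part `u(I) = {f : f = f * g for some g ∈ I}`. -/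
def Ideal.unitPart (I : Ideal A) : Ideal A where
  carrier := {f | ∃ g ∈ I, f = f * g}
  zero_mem' := ⟨0, I.zero_mem, by ring⟩
  add_mem' := by
    rintro a b ⟨g, hg, ha⟩ ⟨h, hh, hb⟩
    exact ⟨g + h - g * h, I.sub_mem (I.add_mem hg hh) (I.mul_mem_right h hg),
      by linear_combination (1 - h) * ha + (1 - g) * hb⟩
  smul_mem' := by
    rintro c a ⟨g, hg, ha⟩
    exact ⟨g, hg, by rw [smul_eq_mul]; linear_combination c * ha⟩

namespace Ideal

theorem isPure_bot : (⊥ : Ideal A).IsPure := fun f hf =>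
  ⟨0, zero_mem _, by rw [mem_bot.mp hf, zero_mul]⟩

theorem IsPure.sup {I J : Ideal A} (hI : I.IsPure) (hJ : J.IsPure) : (I ⊔ J).IsPure := by
  intro f hf
  obtain ⟨a, ha, b, hb, rfl⟩ := Submodule.mem_sup.mp hf
  obtain ⟨g, hg, hag⟩ := hI a ha
  obtain ⟨h, hh, hbh⟩ := hJ b hb
  refine ⟨g + h - g * h, sub_mem (add_mem (mem_sup_left hg) (mem_sup_right hh))
    (mul_mem_right h _ (mem_sup_left hg)), ?_⟩
  linear_combination (1 - h) * hag + (1 - g) * hbh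

theorem isPure_purePart (I : Ideal A) : I.purePart.IsPure := by
  intro f hf
  have hne : {J : Ideal A | J.IsPure ∧ J ≤ I}.Nonempty := ⟨⊥, isPure_bot, bot_le⟩
  have hdir : DirectedOn (· ≤ ·) {J : Ideal A | J.IsPure ∧ J ≤ I} :=
    fun J₁ h₁ J₂ h₂ => ⟨J₁ ⊔ J₂, ⟨h₁.1.sup h₂.1, sup_le h₁.2 h₂.2⟩, le_sup_left, le_sup_right⟩
  obtain ⟨J, hJ, hfJ⟩ := (Submodule.mem_sSup_of_directed hne hdir).mp hf
  obtain ⟨g, hg, hfg⟩ := hJ.1 f hfJ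
  exact ⟨g, le_sSup hJ hg, hfg⟩

theorem purePart_le (I : Ideal A) : I.purePart ≤ I :=
  sSup_le fun _ hJ => hJ.2

theorem IsPure.le_purePart_iff {I J : Ideal A} (hJ : J.IsPure) : J ≤ I.purePart ↔ J ≤ I :=
  ⟨fun h => h.trans I.purePart_le, fun h => le_sSup ⟨hJ, h⟩⟩

theorem purePart_mono {I J : Ideal A} (h : I ≤ J) : I.purePart ≤ J.purePart :=
  I.isPure_purePart.le_purePart_iff.mpr (I.purePart_le.trans h)

theorem IsPrime.isPurelyPrime_purePart {p : Ideal A} (hp : p.IsPrime) :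
    p.purePart.IsPurelyPrime := by
  refine ⟨p.isPure_purePart, ne_top_of_le_ne_top hp.ne_top p.purePart_le, ?_⟩
  intro I J hI hJ hIJ
  rw [hI.le_purePart_iff, hJ.le_purePart_iff]
  exact hp.mul_le.mp (hIJ.trans p.purePart_le)

theorem kerPi_le (p : Ideal A) (hp : p.IsPrime) : p.kerPi hp ≤ p :=
  (ker_le_comap _).trans (Localization.AtPrime.under_maximalIdeal (hI := hp)).le

theorem IsPure.le_kerPi {I p : Ideal A} (hI : I.IsPure) (hp : p.IsPrime) (hle : I ≤ p) :
    I ≤ p.kerPi hp := by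
  refine le_ker_atPrime_of_forall_exists_eq_mul (fun f hf => ?_) hle
  obtain ⟨g, hg, hfg⟩ := hI f hf
  exact ⟨g, hg, by linear_combination hfg⟩

theorem purePart_kerPi (p : Ideal A) (hp : p.IsPrime) :
    (p.kerPi hp).purePart = p.purePart :=
  le_antisymm (purePart_mono (p.kerPi_le hp))
    (p.isPure_purePart.le_purePart_iff.mpr (p.isPure_purePart.le_kerPi hp p.purePart_le))

end Ideal

/-- For a prime ideal `p`, the pure part `ν(p)` is purely-prime and
`ν(p) = ν(Ker π_p)`. -/
theorem purePart_of_prime_isPurelyPrime_and_eq_purePart_kerPi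
    (p : Ideal A) (hp : p.IsPrime) :
    p.purePart.IsPurelyPrime ∧ p.purePart = (p.kerPi hp).purePart :=
  ⟨hp.isPurelyPrime_purePart, (p.purePart_kerPi hp).symm⟩
end

section
/- Let A be a commutative ring and let p ⊆ q be prime ideals of A. Then the pure parts coincide: ν(p) = ν(q). -/
variable {A : Type*} [CommRing A]

namespace Ideal

theorem IsPure.le_of_le_of_isPrime_le {J p q : Ideal A} (hJ : J.IsPure) (hJq : J ≤ q)
    (hq : q ≠ ⊤) (hp : p.IsPrime) (hpq : p ≤ q) : J ≤ p := by
  intro f hf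
  obtain ⟨g, hg, hfg⟩ := hJ f hf
  have h_one_sub : 1 - g ∉ p := fun h =>
    hq <| (eq_top_iff_one q).mpr <| by simpa using q.add_mem (hpq h) (hJq hg)
  exact (hp.mem_or_mem (hfg ▸ p.zero_mem)).resolve_right h_one_sub

end Ideal

/-- If `p ⊆ q` are prime ideals, then `ν(p) = ν(q)`. -/
theorem purePart_eq_of_prime_le_prime
    (p q : Ideal A) (hp : p.IsPrime) (hq : q.IsPrime) (hpq : p ≤ q) :
    p.purePart = q.purePart :=
  le_antisymm (Ideal.purePart_mono hpq) <| sSup_le_sSup fun _ ⟨hJ, hJq⟩ =>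
    ⟨hJ, hJ.le_of_le_of_isPrime_le hJq hq.ne_top hp hpq⟩
end

section
/- Let I be an ideal of a commutative ring A such that the radical √I is a pure ideal. Then I = √I. -/
variable {A : Type*} [CommRing A]

theorem mul_pow_eq_self_of_mul_eq_self {M : Type*} [Monoid M] {a b : M} (h : a * b = a) (n : ℕ) :
    a * b ^ n = a := by
  induction n with
  | zero => rw [pow_zero, mul_one]
  | succ n ih => rw [pow_succ, ← mul_assoc, ih, h]

theorem Ideal.IsPure.le_of_le_radical {J I : Ideal A} (hJ : J.IsPure) (hJI : J ≤ I.radical) :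
    J ≤ I := by
  intro f hf
  obtain ⟨g, hgJ, hfg⟩ := hJ f hf
  obtain ⟨n, hgn⟩ := hJI hgJ
  have hf_fix : f * g = f := by linear_combination -hfg
  rw [← mul_pow_eq_self_of_mul_eq_self hf_fix n]
  exact I.mul_mem_left f hgn

/-- If the radical of `I` is a pure ideal, then `I = √I`. -/
theorem eq_radical_of_radical_isPure (I : Ideal A) (h : I.radical.IsPure) :
    I = I.radical :=
  le_antisymm I.le_radical (h.le_of_le_radical le_rfl)
end

section
/- Let A be a reduced commutative ring and I a pure ideal of A. Then I = {f ∈ A : D(f) ⊆ Supp(I)}; explicitly, an element f ∈ A belongs to I if and only if for every prime ideal p of A with f ∉ p there exists some g ∈ I with Ann(g) ⊆ p. -/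
/-! If `f = f g` with `g ∈ I`, then `Ann(g) ⊆ Ann(f)`, which gives `I ⊆ {f : D(f) ⊆ Supp I}`.
Conversely, for a pure ideal `Supp I` is disjoint from `V(I)`: if `g = g k` with `k ∈ I`, then
`1 - k ∈ Ann(g)`, so no prime of `Supp I` contains `I`. Hence `D(f) ⊆ Supp I` forces
`V(I) ⊆ V(f)`, i.e. `f ∈ √I`. Finally a pure ideal of a reduced ring is radical: `f ^ n = f ^ n g`
with `g ∈ I` makes `f (1 - g)` nilpotent, hence zero. -/

variable {A : Type*} [CommRing A]

namespace Ideal.IsPure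

variable {I p : Ideal A}

theorem exists_mem_forall_mul_eq_zero_mem (hI : I.IsPure) (hp : p.IsPrime) {f : A}
    (hf : f ∈ I) (hfp : f ∉ p) : ∃ g ∈ I, ∀ a : A, a * g = 0 → a ∈ p := by
  obtain ⟨g, hg, hfg⟩ := hI f hf
  refine ⟨g, hg, fun a ha => ?_⟩
  have haf : a * f = 0 := by linear_combination a * hfg + f * ha
  exact (hp.mem_or_mem (haf ▸ p.zero_mem)).resolve_right hfp

theorem not_le_of_forall_mul_eq_zero_mem (hI : I.IsPure) (hp : p ≠ ⊤) {g : A} (hg : g ∈ I)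
    (hann : ∀ a : A, a * g = 0 → a ∈ p) : ¬I ≤ p := by
  intro hIp
  obtain ⟨k, hk, hgk⟩ := hI g hg
  have h1k : 1 - k ∈ p := hann (1 - k) (by linear_combination hgk)
  exact hp ((Ideal.eq_top_iff_one p).mpr (by simpa using p.add_mem h1k (hIp hk)))

theorem isRadical [IsReduced A] (hI : I.IsPure) : I.IsRadical := by
  rintro f ⟨n, hfn⟩
  obtain ⟨g, hg, hfg⟩ := hI _ hfn
  have hnil : (f * (1 - g)) ^ (n + 1) = 0 := by
    rw [mul_pow, pow_succ f, pow_succ (1 - g)]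
    linear_combination f * (1 - g) ^ n * hfg
  have hfg' : f * (1 - g) = 0 := IsNilpotent.eq_zero ⟨n + 1, hnil⟩
  exact (by linear_combination -hfg' : f * g = f) ▸ I.mul_mem_left f hg

end Ideal.IsPure

/-- If `I` is a pure ideal of a reduced ring `A`, then
`I = {f : D(f) ⊆ Supp I}`: an element `f` belongs to `I` iff for every prime `p`
with `f ∉ p` there exists `g ∈ I` with `Ann(g) ⊆ p`. -/
theorem pure_ideal_eq_of_isReduced [IsReduced A] (I : Ideal A) (hI : I.IsPure) :
    ∀ f : A, f ∈ I ↔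
      ∀ p : Ideal A, p.IsPrime → f ∉ p → ∃ g ∈ I, ∀ a : A, a * g = 0 → a ∈ p := by
  intro f
  refine ⟨fun hf p hp hfp => hI.exists_mem_forall_mul_eq_zero_mem hp hf hfp, fun h => ?_⟩
  refine hI.isRadical ?_
  rw [Ideal.radical_eq_sInf, Submodule.mem_sInf]
  rintro p ⟨hIp, hp⟩
  by_contra hfp
  obtain ⟨g, hg, hann⟩ := h p hp hfp
  exact hI.not_le_of_forall_mul_eq_zero_mem hp.ne_top hg hann hIp
end

section
/- Let A be a commutative ring and let e, f ∈ A be idempotent elements. If every purely-prime ideal of A contains e if and only if it contains f, then e = f. (This is the injectivity part of the Grothendieck-type theorem: the map e ↦ U_e = {P purely-prime : e ∉ P} from idempotents of A to subsets of the pure spectrum is injective.) -/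
variable {A : Type*} [CommRing A]

/-!
If `e ≠ f`, one of the idempotents `g = e(1 - f)`, `f(1 - e)` is nonzero, say `g`. The principal
ideal generated by the idempotent `1 - g` is pure and proper, so by Zorn's lemma it lies in a
purely-maximal ideal `P`, and purely-maximal ideals are purely prime. Then `f = f(1 - g) ∈ P`,
while `e ∈ P` would force `g ∈ P` and hence `1 ∈ P`.
-/

namespace Ideal

theorem IsPure.sSup_of_directedOn {S : Set (Ideal A)} (hS : S.Nonempty)
    (hdir : DirectedOn (· ≤ ·) S) (hpure : ∀ I ∈ S, I.IsPure) : (sSup S).IsPure := by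
  intro x hx
  obtain ⟨I, hIS, hxI⟩ := (Submodule.mem_sSup_of_directed hS hdir).mp hx
  obtain ⟨g, hg, hxg⟩ := hpure I hIS x hxI
  exact ⟨g, le_sSup hIS hg, hxg⟩

theorem isPure_span_singleton_of_isIdempotentElem {e : A} (he : IsIdempotentElem e) :
    (span {e}).IsPure := by
  intro x hx
  obtain ⟨a, rfl⟩ := mem_span_singleton'.mp hx
  exact ⟨e, mem_span_singleton_self e, by rw [mul_assoc, he.mul_one_sub_self, mul_zero]⟩

theorem exists_isPurelyMaximal_le {B : Ideal A} (hB : B.IsPure) (hBtop : B ≠ ⊤) :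
    ∃ P : Ideal A, P.IsPurelyMaximal ∧ B ≤ P := by
  have hchain : ∀ c ⊆ {Q : Ideal A | Q.IsPure ∧ Q ≠ ⊤}, IsChain (· ≤ ·) c →
      ∀ y ∈ c, ∃ ub ∈ {Q : Ideal A | Q.IsPure ∧ Q ≠ ⊤}, ∀ z ∈ c, z ≤ ub := by
    intro c hc hc_chain y hy
    refine ⟨sSup c, ⟨IsPure.sSup_of_directedOn ⟨y, hy⟩ hc_chain.directedOn
      fun I hI => (hc hI).1, ?_⟩, fun z hz => le_sSup hz⟩
    rw [ne_eq, eq_top_iff_one, Submodule.mem_sSup_of_directed ⟨y, hy⟩ hc_chain.directedOn]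
    rintro ⟨I, hIc, h1I⟩
    exact (hc hIc).2 ((eq_top_iff_one I).mpr h1I)
  obtain ⟨P, hBP, ⟨hP, hPtop⟩, hPmax⟩ := zorn_le_nonempty₀ _ hchain B ⟨hB, hBtop⟩
  exact ⟨P, ⟨hP, hPtop, fun Q hQ hQtop hPQ => hPQ.antisymm (hPmax ⟨hQ, hQtop⟩ hPQ)⟩, hBP⟩

theorem IsPurelyMaximal.isPurelyPrime {P : Ideal A} (hP : P.IsPurelyMaximal) :
    P.IsPurelyPrime := by
  obtain ⟨hPpure, hPtop, hPmax⟩ := hP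
  refine ⟨hPpure, hPtop, fun I J hI _ hIJ => or_iff_not_imp_left.mpr fun hIP => ?_⟩
  have hcoprime : P ⊔ I = ⊤ := by
    by_contra hne
    exact hIP (le_sup_right.trans_eq (hPmax _ (hPpure.sup hI) hne le_sup_left).symm)
  calc J = (P ⊔ I) * J := by rw [hcoprime, top_mul]
    _ = P * J ⊔ I * J := sup_mul P I J
    _ ≤ P := sup_le mul_le_left hIJ

theorem exists_isPurelyPrime_one_sub_mem {g : A} (hg : IsIdempotentElem g) (hg0 : g ≠ 0) :
    ∃ P : Ideal A, P.IsPurelyPrime ∧ 1 - g ∈ P := by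
  have hproper : span {1 - g} ≠ ⊤ := by
    rw [ne_eq, span_singleton_eq_top]
    intro hunit
    apply hg0
    simpa using (IsIdempotentElem.iff_eq_one_of_isUnit hunit).mp hg.one_sub
  obtain ⟨P, hP, hle⟩ :=
    exists_isPurelyMaximal_le (isPure_span_singleton_of_isIdempotentElem hg.one_sub) hproper
  exact ⟨P, hP.isPurelyPrime, hle (mem_span_singleton_self _)⟩

theorem exists_isPurelyPrime_mem_and_notMem {e f : A} (he : IsIdempotentElem e)
    (hf : IsIdempotentElem f) (hef : e * (1 - f) ≠ 0) :
    ∃ P : Ideal A, P.IsPurelyPrime ∧ f ∈ P ∧ e ∉ P := by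
  obtain ⟨P, hP, hgP⟩ := exists_isPurelyPrime_one_sub_mem (he.mul hf.one_sub) hef
  refine ⟨P, hP, ?_, fun heP => hP.2.1 ((eq_top_iff_one P).mpr ?_)⟩
  · have hfg : f = f * (1 - e * (1 - f)) := by linear_combination (-e) * hf.eq
    exact hfg ▸ P.mul_mem_left f hgP
  · simpa using P.add_mem hgP (P.mul_mem_right (1 - f) heP)

end Ideal

/-- injectivity part of the Grothendieck type theorem: idempotents
`e`, `f` lying in exactly the same purely-prime ideals are equal. -/
theorem idempotent_eq_of_forall_purelyPrime_mem_iff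
    (e f : A) (he : IsIdempotentElem e) (hf : IsIdempotentElem f)
    (h : ∀ P : Ideal A, P.IsPurelyPrime → (e ∈ P ↔ f ∈ P)) :
    e = f := by
  by_contra hne
  have hsep : e * (1 - f) ≠ 0 ∨ f * (1 - e) ≠ 0 := by
    by_contra! hzero
    exact hne (by linear_combination hzero.1 - hzero.2)
  rcases hsep with hef | hfe
  · obtain ⟨P, hP, hfP, heP⟩ := Ideal.exists_isPurelyPrime_mem_and_notMem he hf hef
    exact heP ((h P hP).mpr hfP)
  · obtain ⟨P, hP, heP, hfP⟩ := Ideal.exists_isPurelyPrime_mem_and_notMem hf he hfe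
    exact hfP ((h P hP).mp heP)
end

section
/- Let A be a Gelfand ring. Then the purely-maximal ideals of A are exactly the ideals of the form Ker π_m where m is a maximal ideal of A; that is, for every maximal ideal m of A, Ker π_m is a purely-maximal ideal, and every purely-maximal ideal of A equals Ker π_m for some maximal ideal m. -/
variable {A : Type*} [CommRing A]

/-! In a Gelfand ring, if `I ⊄ m` with `m` maximal, some `t ∉ m` kills an element of `1 + I`:
otherwise a prime avoiding every product `t * (1 + i)` would lie in `m` and, together with `I`,
in a second maximal ideal. This makes `Ker π_m` pure, and shows that `Ker π_m ⊆ n` forces `n = m`.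
Since a pure ideal inside a prime `p` lies in `Ker π_p`, `Ker π_m` is then the unique
purely-maximal ideal below `m`. -/

namespace Ideal

theorem mem_kerPi_iff (p : Ideal A) (hp : p.IsPrime) (f : A) :
    f ∈ p.kerPi hp ↔ ∃ s ∉ p, s * f = 0 := by
  let := hp
  rw [kerPi, RingHom.mem_ker, IsLocalization.map_eq_zero_iff p.primeCompl]
  exact ⟨fun ⟨s, h⟩ => ⟨s, s.2, h⟩, fun ⟨s, hs, h⟩ => ⟨⟨s, hs⟩, h⟩⟩

theorem kerPi_ne_top (p : Ideal A) (hp : p.IsPrime) : p.kerPi hp ≠ ⊤ :=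
  fun h => hp.ne_top (top_le_iff.mp (h ▸ p.kerPi_le hp))

theorem IsPure.le_kerPi_s6 {Q p : Ideal A} (hQ : Q.IsPure) (hp : p.IsPrime) (hQp : Q ≤ p) :
    Q ≤ p.kerPi hp := by
  intro f hf
  obtain ⟨g, hg, hfg⟩ := hQ f hf
  refine (p.mem_kerPi_iff hp f).mpr ⟨1 - g, fun h => hp.ne_top ?_, by rw [mul_comm, hfg]⟩
  exact (eq_top_iff_one p).mpr (by simpa using p.add_mem h (hQp hg))

end Ideal

namespace IsGelfandRing

theorem exists_mul_one_add_eq_zero (hA : IsGelfandRing A) {m I : Ideal A} (hm : m.IsMaximal)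
    (hI : ¬I ≤ m) : ∃ t ∉ m, ∃ i ∈ I, t * (1 + i) = 0 := by
  by_contra! h
  let S : Submonoid A :=
    { carrier := {x | ∃ t ∉ m, ∃ i ∈ I, x = t * (1 + i)}
      one_mem' := ⟨1, m.ne_top_iff_one.mp hm.ne_top, 0, I.zero_mem, by ring⟩
      mul_mem' := by
        rintro _ _ ⟨t, ht, i, hi, rfl⟩ ⟨t', ht', i', hi', rfl⟩
        exact ⟨t * t', hm.isPrime.mul_notMem ht ht', i + i' + i * i',
          I.add_mem (I.add_mem hi hi') (I.mul_mem_right i' hi), by ring⟩ }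
  have hS : Disjoint ((⊥ : Ideal A) : Set A) S := by
    rw [Set.disjoint_left]
    rintro _ hx ⟨t, ht, i, hi, rfl⟩
    exact h t ht i hi hx
  obtain ⟨p, hp, -, hpS⟩ := Ideal.exists_le_prime_disjoint ⊥ S hS
  have hpS' : ∀ x ∈ S, x ∉ p := fun x hx hxp => Set.disjoint_left.mp hpS hxp hx
  have hpm : p ≤ m := fun x hxp => by
    by_contra hxm
    exact hpS' x ⟨x, hxm, 0, I.zero_mem, by ring⟩ hxp
  have hpI : p ⊔ I ≠ ⊤ := by
    intro htop
    obtain ⟨q, hq, i, hi, hqi⟩ := Submodule.mem_sup.mp (htop ▸ Submodule.mem_top (x := (1 : A)))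
    exact hpS' q ⟨1, m.ne_top_iff_one.mp hm.ne_top, -i, I.neg_mem hi,
      by linear_combination hqi⟩ hq
  obtain ⟨n, hn, hpIn⟩ := Ideal.exists_le_maximal _ hpI
  obtain ⟨_, -, huniq⟩ := hA p hp
  have hmn : m = n := (huniq m ⟨hm, hpm⟩).trans (huniq n ⟨hn, le_sup_left.trans hpIn⟩).symm
  exact hI (hmn ▸ le_sup_right.trans hpIn)

theorem kerPi_isPure (hA : IsGelfandRing A) {m : Ideal A} (hm : m.IsMaximal) :
    (m.kerPi hm.isPrime).IsPure := by
  intro f hf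
  obtain ⟨s, hs, hsf⟩ := (m.mem_kerPi_iff hm.isPrime f).mp hf
  obtain ⟨t, ht, i, hi, hti⟩ := hA.exists_mul_one_add_eq_zero hm (I := Ideal.span {s})
    fun h => hs (h (Ideal.mem_span_singleton_self s))
  obtain ⟨x, rfl⟩ := Ideal.mem_span_singleton'.mp hi
  refine ⟨1 + x * s, (m.mem_kerPi_iff hm.isPrime _).mpr ⟨t, ht, hti⟩, ?_⟩
  linear_combination -x * hsf

theorem eq_of_kerPi_le (hA : IsGelfandRing A) {m n : Ideal A} (hm : m.IsMaximal)
    (hn : n.IsMaximal) (hle : m.kerPi hm.isPrime ≤ n) : m = n := by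
  by_contra hmn
  obtain ⟨t, ht, i, hi, hti⟩ :=
    hA.exists_mul_one_add_eq_zero hm fun hnm => hmn (hn.eq_of_le hm.ne_top hnm).symm
  have hin : 1 + i ∉ n := fun h =>
    hn.ne_top (n.eq_top_iff_one.mpr (by simpa using n.sub_mem h hi))
  exact hin (hle ((m.mem_kerPi_iff hm.isPrime _).mpr ⟨t, ht, hti⟩))

end IsGelfandRing

/-- The purely-maximal ideals of a Gelfand ring are precisely the ideals
`Ker π_m` with `m` maximal. -/
theorem purelyMaximal_iff_kerPi_of_gelfand (hA : IsGelfandRing A) :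
    (∀ (m : Ideal A) (hm : m.IsMaximal), (m.kerPi hm.isPrime).IsPurelyMaximal) ∧
    (∀ P : Ideal A, P.IsPurelyMaximal →
      ∃ (m : Ideal A) (hm : m.IsMaximal), P = m.kerPi hm.isPrime) := by
  constructor
  · intro m hm
    refine ⟨hA.kerPi_isPure hm, m.kerPi_ne_top hm.isPrime, fun Q hQ hQtop hle => ?_⟩
    obtain ⟨n, hn, hQn⟩ := Ideal.exists_le_maximal Q hQtop
    obtain rfl := hA.eq_of_kerPi_le hm hn (hle.trans hQn)
    exact le_antisymm hle (hQ.le_kerPi_s6 hn.isPrime hQn)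
  · rintro P ⟨hP, hPtop, hPmax⟩
    obtain ⟨m, hm, hPm⟩ := Ideal.exists_le_maximal P hPtop
    exact ⟨m, hm, hPmax _ (hA.kerPi_isPure hm) (m.kerPi_ne_top hm.isPrime)
      (hP.le_kerPi_s6 hm.isPrime hPm)⟩
end

section
/- Let I and J be ideals of a commutative ring A. Then ν(IJ) = ν(I)ν(J), where ν denotes the pure part. -/
variable {A : Type*} [CommRing A]

/-!
A pure ideal `K` is idempotent (`f = f g` with `f, g ∈ K`), pure ideals are closed under
products, and the pure part is itself pure because `K` is pure exactly when `K ≤ u(K)`,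
with the unit part `u` monotone. Hence `ν(IJ) = ν(IJ)² ≤ ν(I)ν(J)`, while `ν(I)ν(J)` is a
pure ideal inside `IJ`.
-/

namespace Ideal

theorem unitPart_mono {I J : Ideal A} (h : I ≤ J) : I.unitPart ≤ J.unitPart := by
  rintro f ⟨g, hg, hfg⟩
  exact ⟨g, h hg, hfg⟩

theorem isPure_iff_le_unitPart {K : Ideal A} : K.IsPure ↔ K ≤ K.unitPart := by
  refine forall₂_congr fun f _ => exists_congr fun g => and_congr_right fun _ => ?_
  constructor <;> intro h <;> linear_combination h

theorem isPure_sSup {S : Set (Ideal A)} (hS : ∀ K ∈ S, K.IsPure) : (sSup S).IsPure :=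
  isPure_iff_le_unitPart.2 <| sSup_le fun K hK =>
    (isPure_iff_le_unitPart.1 (hS K hK)).trans (unitPart_mono (le_sSup hK))

theorem IsPure.le_purePart {K I : Ideal A} (hK : K.IsPure) (hKI : K ≤ I) : K ≤ I.purePart :=
  le_sSup ⟨hK, hKI⟩

theorem IsPure.mul {K L : Ideal A} (hK : K.IsPure) (hL : L.IsPure) : (K * L).IsPure := by
  intro f hf
  obtain ⟨g, hg, hfg⟩ := hK f (mul_le_left hf)
  obtain ⟨h, hh, hfh⟩ := hL f (mul_le_right hf)
  exact ⟨g * h, mul_mem_mul hg hh, by linear_combination h * hfg + hfh⟩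

theorem IsPure.mul_self {K : Ideal A} (hK : K.IsPure) : K * K = K := by
  refine le_antisymm mul_le_left fun f hf => ?_
  obtain ⟨g, hg, hfg⟩ := isPure_iff_le_unitPart.1 hK hf
  rw [hfg]
  exact mul_mem_mul hf hg

end Ideal

/-- `ν(IJ) = ν(I)ν(J)` for all ideals `I`, `J`. -/
theorem purePart_mul (I J : Ideal A) :
    (I * J).purePart = I.purePart * J.purePart := by
  refine le_antisymm ?_ ?_
  · have hP := Ideal.isPure_purePart (I * J)
    calc (I * J).purePart = (I * J).purePart * (I * J).purePart := hP.mul_self.symm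
      _ ≤ I.purePart * J.purePart :=
        mul_le_mul' (hP.le_purePart ((Ideal.purePart_le _).trans Ideal.mul_le_left))
          (hP.le_purePart ((Ideal.purePart_le _).trans Ideal.mul_le_right))
  · exact ((Ideal.isPure_purePart I).mul (Ideal.isPure_purePart J)).le_purePart
      (mul_le_mul' (Ideal.purePart_le I) (Ideal.purePart_le J))
end

section
/- For a commutative ring A, the following statements are equivalent: (i) A is a Gelfand ring; (ii) if I and J are ideals of A with I + J = A, then ν(I) + ν(J) = A; (iii) for every family (I_k) of ideals of A, ν(Σ_k I_k) = Σ_k ν(I_k); (iv) for every ideal I of A, Rad(I) = Rad(ν(I)); (v) for every pair of distinct maximal ideals m and m' of A, ν(m) + ν(m') = A; (vi) for every ideal I of A and every maximal ideal m of A, if ν(I) ⊆ m then I ⊆ m; (vii) for every ideal I of A and every maximal ideal m of A, I ⊆ m if and only if ν(I) ⊆ m. -/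
variable {A : Type*} [CommRing A]

/-!
In a Gelfand ring two distinct maximal ideals `m ≠ m'` are separated by a zero product `s t = 0`
with `s ∉ m`, `t ∉ m'` (otherwise a prime ideal avoiding all such products would lie in both), so
the kernel of `A → A_m` is comaximal with every `f ∉ m`. This yields `s ∉ m` with `s (1 - c f) = 0`:
the unit part `u(I) = {a | a = a g, g ∈ I}` escapes every maximal ideal that `I` escapes, and the
same fact shows that `u(I)` is pure, hence `u(I) ≤ ν(I)`. Conversely, a pure ideal inside a proper
ideal lies in every prime ideal it contains, so comaximality of `ν(m)` and `ν(m')` forbids a prime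
below both `m` and `m'`. The other implications are formal once one knows that a pure ideal
contained in the Jacobson radical of `J` is contained in `J`.
-/

namespace Ideal

theorem unitPart_le (I : Ideal A) : I.unitPart ≤ I := by
  rintro a ⟨g, hg, hag⟩
  rw [hag]
  exact I.mul_mem_left a hg

theorem mem_kerPi {p : Ideal A} (hp : p.IsPrime) {b : A} :
    b ∈ p.kerPi hp ↔ ∃ s ∉ p, s * b = 0 := by
  have := hp
  rw [kerPi, RingHom.mem_ker, IsLocalization.map_eq_zero_iff p.primeCompl]
  exact ⟨fun ⟨s, hs⟩ => ⟨s, s.2, hs⟩, fun ⟨s, hs, h⟩ => ⟨⟨s, hs⟩, h⟩⟩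

-- `1 - (g₁ + g₂ - g₁ g₂) = (1 - g₁)(1 - g₂)`
theorem isPure_iSup {ι : Sort*} {P : ι → Ideal A} (hP : ∀ i, (P i).IsPure) :
    (⨆ i, P i).IsPure := by
  intro f hf
  refine Submodule.iSup_induction P (motive := fun f => ∃ g ∈ ⨆ i, P i, f * (1 - g) = 0) hf
    (fun i f hf => ?_) ⟨0, zero_mem _, zero_mul _⟩ fun f₁ f₂ ⟨g₁, hg₁, h₁⟩ ⟨g₂, hg₂, h₂⟩ => ?_
  · obtain ⟨g, hg, hfg⟩ := hP i f hf
    exact ⟨g, mem_iSup_of_mem i hg, hfg⟩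
  · refine ⟨g₁ + g₂ - g₁ * g₂, sub_mem (add_mem hg₁ hg₂) (mul_mem_left _ _ hg₂), ?_⟩
    linear_combination (1 - g₂) * h₁ + (1 - g₁) * h₂

theorem IsPure.le_purePart_s8 {P I : Ideal A} (hP : P.IsPure) (h : P ≤ I) : P ≤ I.purePart :=
  le_sSup ⟨hP, h⟩

theorem purePart_top : (⊤ : Ideal A).purePart = ⊤ :=
  top_le_iff.mp <| IsPure.le_purePart_s8 (fun _ _ => ⟨1, Submodule.mem_top, by ring⟩) le_rfl

theorem isPure_of_sup_annihilator_eq_top {P : Ideal A}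
    (h : ∀ f ∈ P, P ⊔ (span {f}).annihilator = ⊤) : P.IsPure := by
  intro f hf
  obtain ⟨g, hg, r, hr, hgr⟩ := Submodule.mem_sup.mp ((eq_top_iff_one _).mp (h f hf))
  rw [Submodule.mem_annihilator_span_singleton, smul_eq_mul] at hr
  exact ⟨g, hg, by rw [← hgr, add_sub_cancel_left, mul_comm, hr]⟩

theorem mem_of_mul_one_sub_eq_zero {I : Ideal A} {f g : A} (hg : g ∈ I.jacobson)
    (hfg : f * (1 - g) = 0) : f ∈ I := by
  obtain ⟨z, hz⟩ := mem_jacobson_iff.mp hg (-1)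
  have h := I.mul_mem_left f hz
  rwa [show f * (z * -1 * g + z - 1) = z * (f * (1 - g)) - f by ring, hfg, mul_zero, zero_sub,
    neg_mem_iff] at h

theorem IsPure.le_of_le_jacobson {P I : Ideal A} (hP : P.IsPure) (h : P ≤ I.jacobson) : P ≤ I :=
  fun f hf => by
    obtain ⟨g, hg, hfg⟩ := hP f hf
    exact mem_of_mul_one_sub_eq_zero (h hg) hfg

theorem IsPure.le_of_isPrime {P p I : Ideal A} (hP : P.IsPure) (hp : p.IsPrime) (hPI : P ≤ I)
    (hpI : p ≤ I) (hI : I ≠ ⊤) : P ≤ p := by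
  intro f hf
  obtain ⟨g, hg, hfg⟩ := hP f hf
  refine (hp.mem_or_mem (hfg ▸ p.zero_mem)).resolve_right fun h1g => hI ?_
  exact (eq_top_iff_one I).mpr (by simpa using add_mem (hpI h1g) (hPI hg))

theorem jacobson_eq_jacobson_iff {I J : Ideal A} :
    I.jacobson = J.jacobson ↔ ∀ m : Ideal A, m.IsMaximal → (I ≤ m ↔ J ≤ m) := by
  have le_iff_jacobson_le (K m : Ideal A) (hm : m.IsMaximal) : K ≤ m ↔ K.jacobson ≤ m :=
    ⟨fun h => sInf_le ⟨h, hm⟩, le_jacobson.trans⟩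
  refine ⟨fun h m hm => by rw [le_iff_jacobson_le I m hm, le_iff_jacobson_le J m hm, h], fun h => ?_⟩
  simp only [jacobson]
  congr 1
  ext m
  exact and_congr_left (h m)

theorem iSup_purePart_le {ι : Sort*} (I : ι → Ideal A) :
    ⨆ k, (I k).purePart ≤ (⨆ k, I k).purePart :=
  iSup_le fun k => purePart_mono (le_iSup I k)

theorem purePart_iSup_le {ι : Sort*}
    (h : ∀ (J m : Ideal A), m.IsMaximal → J.purePart ≤ m → J ≤ m) (I : ι → Ideal A) :
    (⨆ k, I k).purePart ≤ ⨆ k, (I k).purePart := by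
  refine (isPure_purePart _).le_of_le_jacobson (le_sInf fun m ⟨hm, hmax⟩ => ?_)
  exact (purePart_le _).trans <| iSup_le fun k => h _ m hmax ((le_iSup _ k).trans hm)

end Ideal

open Ideal

theorem isGelfandRing_of_purePart_add_eq_top
    (h : ∀ m m' : Ideal A, m.IsMaximal → m'.IsMaximal → m ≠ m' → m.purePart + m'.purePart = ⊤) :
    IsGelfandRing A := by
  intro p hp
  obtain ⟨m, hm, hpm⟩ := exists_le_maximal p hp.ne_top
  refine ⟨m, ⟨hm, hpm⟩, fun m' ⟨hm', hpm'⟩ => ?_⟩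
  by_contra hne
  have hle : m.purePart + m'.purePart ≤ m' :=
    sup_le (((isPure_purePart m).le_of_isPrime hp (purePart_le m) hpm hm.ne_top).trans hpm')
      (purePart_le m')
  exact hm'.ne_top (top_le_iff.mp (h m m' hm hm' (Ne.symm hne) ▸ hle))

namespace IsGelfandRing

variable {m m' : Ideal A}

theorem not_kerPi_le (hA : IsGelfandRing A) (hm : m.IsMaximal) (hm' : m'.IsMaximal)
    (hne : m ≠ m') : ¬ m.kerPi hm.isPrime ≤ m' := by
  intro hle
  have hdisj : Disjoint ((⊥ : Ideal A) : Set A) (m.primeCompl ⊔ m'.primeCompl : Submonoid A) := by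
    refine Set.disjoint_left.mpr fun x hx hS => ?_
    obtain ⟨s, hs, t, ht, rfl⟩ := Submonoid.mem_sup.mp hS
    exact ht (hle ((mem_kerPi hm.isPrime).mpr ⟨s, hs, hx⟩))
  obtain ⟨p, hp, -, hpS⟩ := exists_le_prime_disjoint ⊥ _ hdisj
  have hp_le (q : Ideal A) [q.IsPrime] (hq : q.primeCompl ≤ m.primeCompl ⊔ m'.primeCompl) :
      p ≤ q := fun x hx => not_not.mp fun hxq => Set.disjoint_left.mp hpS hx (hq hxq)
  exact hne ((hA p hp).unique ⟨hm, hp_le m le_sup_left⟩ ⟨hm', hp_le m' le_sup_right⟩)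

theorem span_sup_kerPi_eq_top (hA : IsGelfandRing A) (hm : m.IsMaximal) {f : A} (hf : f ∉ m) :
    span {f} ⊔ m.kerPi hm.isPrime = ⊤ := by
  by_contra h
  obtain ⟨m', hm', hle⟩ := exists_le_maximal _ h
  have hne : m ≠ m' := by
    rintro rfl
    exact hf (hle (Submodule.mem_sup_left (mem_span_singleton_self f)))
  exact hA.not_kerPi_le hm hm' hne (le_sup_right.trans hle)

theorem unitPart_not_le (hA : IsGelfandRing A) (hm : m.IsMaximal) {I : Ideal A}
    (hI : ¬ I ≤ m) : ¬ I.unitPart ≤ m := by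
  obtain ⟨f, hfI, hfm⟩ := Set.not_subset.mp hI
  obtain ⟨y, hy, b, hb, hyb⟩ :=
    Submodule.mem_sup.mp ((eq_top_iff_one _).mp (hA.span_sup_kerPi_eq_top hm hfm))
  obtain ⟨c, rfl⟩ := mem_span_singleton'.mp hy
  obtain ⟨s, hs, hsb⟩ := (mem_kerPi hm.isPrime).mp hb
  exact fun hle => hs (hle ⟨c * f, I.mul_mem_left c hfI, by linear_combination hsb - s * hyb⟩)

theorem isPure_unitPart (hA : IsGelfandRing A) (I : Ideal A) : I.unitPart.IsPure := by
  refine isPure_of_sup_annihilator_eq_top fun a ⟨g, hgI, hag⟩ => ?_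
  by_contra h
  obtain ⟨m, hm, hle⟩ := exists_le_maximal _ h
  have h1g : 1 - g ∈ m := hle <| Submodule.mem_sup_right <|
    (Submodule.mem_annihilator_span_singleton _ _).mpr (by rw [smul_eq_mul]; linear_combination hag)
  have hgm : g ∉ m := fun hgm => hm.ne_top ((eq_top_iff_one m).mpr (by simpa using add_mem h1g hgm))
  exact hA.unitPart_not_le hm (fun hIm => hgm (hIm hgI)) (le_sup_left.trans hle)

theorem le_of_purePart_le (hA : IsGelfandRing A) (hm : m.IsMaximal) {I : Ideal A}
    (h : I.purePart ≤ m) : I ≤ m := by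
  by_contra hI
  exact hA.unitPart_not_le hm hI (((hA.isPure_unitPart I).le_purePart_s8 (unitPart_le I)).trans h)

end IsGelfandRing

universe u

/-- pure part characterization of Gelfand rings. -/
theorem gelfand_tfae_purePart (A : Type u) [CommRing A] :
    List.TFAE
      [ IsGelfandRing A,
        ∀ I J : Ideal A, I + J = ⊤ → I.purePart + J.purePart = ⊤,
        ∀ (ι : Type u) (I : ι → Ideal A),
          (⨆ k, I k).purePart = ⨆ k, (I k).purePart,
        ∀ I : Ideal A, I.jacobson = I.purePart.jacobson,
        ∀ m m' : Ideal A, m.IsMaximal → m'.IsMaximal → m ≠ m' →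
          m.purePart + m'.purePart = ⊤,
        ∀ I m : Ideal A, m.IsMaximal → I.purePart ≤ m → I ≤ m,
        ∀ I m : Ideal A, m.IsMaximal → (I ≤ m ↔ I.purePart ≤ m) ] := by
  tfae_have 1 → 6 := fun hA _ _ hm => hA.le_of_purePart_le hm
  tfae_have 6 → 7 := fun h6 I m hm => ⟨(purePart_le I).trans, h6 I m hm⟩
  tfae_have 7 → 6 := fun h7 I m hm => (h7 I m hm).mpr
  tfae_have 7 ↔ 4 := forall_congr' fun _ => jacobson_eq_jacobson_iff.symm
  tfae_have 6 → 3 := fun h6 _ I =>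
    le_antisymm (purePart_iSup_le h6 I) (iSup_purePart_le I)
  tfae_have 3 → 2 := by
    intro h3 I J hIJ
    have hsup := h3 (ULift Bool) fun k => cond k.down I J
    simp only [iSup_ulift, iSup_bool_eq, cond_true, cond_false] at hsup
    rw [Submodule.add_eq_sup] at hIJ ⊢
    rw [← hsup, hIJ, purePart_top]
  tfae_have 2 → 5 := fun h2 m m' hm hm' hne =>
    h2 m m' (by rw [Submodule.add_eq_sup]; exact hm.coprime_of_ne hm' hne)
  tfae_have 5 → 1 := isGelfandRing_of_purePart_add_eq_top
  tfae_finish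
end

section
/- Let A be a Gelfand ring and I a pure ideal of A. Then I = Σ_{f ∈ I} ν(Af), the sum over all f ∈ I of the pure parts of the principal ideals Af. -/
variable {A : Type*} [CommRing A]

/-!
Pureness of `I` gives, for `f ∈ I`, some `g ∈ I` with `f = f * g`, so `f` lies in the unit part
`u(Ag)`. In a Gelfand ring unit parts are pure: from `y + (1 - y) = 1` one gets `r, s` with
`(1 - y * r) * (1 - (1 - y) * s) = 0`, and `1 - (1 - y) * s` is the witness required by pureness.
Hence `f ∈ u(Ag) ≤ ν(Ag)`; the reverse inclusion is `ν(Af) ≤ Af ≤ I`.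
-/

namespace Ideal

theorem exists_isMaximal_le_mem_of_forall_one_sub_mul_notMem {p : Ideal A} {c : A}
    (h : ∀ r, 1 - c * r ∉ p) : ∃ m : Ideal A, m.IsMaximal ∧ p ≤ m ∧ c ∈ m := by
  have hne : span {c} ⊔ p ≠ ⊤ := by
    rw [ne_eq, eq_top_iff_one, mem_span_singleton_sup]
    rintro ⟨r, q, hq, hrq⟩
    exact h r (by rwa [show 1 - c * r = q by linear_combination -hrq])
  obtain ⟨m, hm, hle⟩ := exists_le_maximal _ hne
  exact ⟨m, hm, le_sup_right.trans hle, hle (mem_sup_left (mem_span_singleton_self c))⟩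

end Ideal

/-- A prime avoiding every `(1 - a * r) * (1 - b * s)` lies in maximal ideals containing `a` and
`b` respectively; in a Gelfand ring these coincide, contradicting `a + b = 1`. -/
theorem IsGelfandRing.exists_mul_eq_zero_of_add_eq_one (hA : IsGelfandRing A) {a b : A}
    (hab : a + b = 1) : ∃ r s : A, (1 - a * r) * (1 - b * s) = 0 := by
  by_contra! hne
  let S : Submonoid A :=
    { carrier := {x | ∃ r s : A, x = (1 - a * r) * (1 - b * s)}
      one_mem' := ⟨0, 0, by ring⟩
      mul_mem' := by
        rintro _ _ ⟨r, s, rfl⟩ ⟨r', s', rfl⟩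
        exact ⟨r + r' - a * r * r', s + s' - b * s * s', by ring⟩ }
  have hdisj : Disjoint ((⊥ : Ideal A) : Set A) S := by
    rw [Set.disjoint_left]
    rintro _ hx ⟨r, s, rfl⟩
    exact hne r s ((Submodule.mem_bot A).mp hx)
  obtain ⟨p, hp, -, hpS⟩ := Ideal.exists_le_prime_disjoint ⊥ S hdisj
  have hp_notMem : ∀ x ∈ S, x ∉ p := fun x hx hxp => Set.disjoint_left.mp hpS hxp hx
  obtain ⟨ma, hma, hpma, ha⟩ := Ideal.exists_isMaximal_le_mem_of_forall_one_sub_mul_notMem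
    (p := p) (c := a) fun r => hp_notMem _ ⟨r, 0, by ring⟩
  obtain ⟨mb, hmb, hpmb, hb⟩ := Ideal.exists_isMaximal_le_mem_of_forall_one_sub_mul_notMem
    (p := p) (c := b) fun s => hp_notMem _ ⟨0, s, by ring⟩
  obtain ⟨m, -, hm⟩ := hA p hp
  have hab_eq : ma = mb := (hm ma ⟨hma, hpma⟩).trans (hm mb ⟨hmb, hpmb⟩).symm
  subst hab_eq
  exact hma.ne_top ((Ideal.eq_top_iff_one _).mpr (hab ▸ ma.add_mem ha hb))

namespace Ideal

theorem unitPart_isPure (hA : IsGelfandRing A) (J : Ideal A) : J.unitPart.IsPure := by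
  rintro x ⟨y, hy, hxy⟩
  obtain ⟨r, s, hrs⟩ := hA.exists_mul_eq_zero_of_add_eq_one (add_sub_cancel y 1)
  refine ⟨1 - (1 - y) * s, ⟨y * r, J.mul_mem_right r hy, by linear_combination hrs⟩, ?_⟩
  linear_combination s * hxy

theorem unitPart_le_s10 (J : Ideal A) : J.unitPart ≤ J := by
  rintro x ⟨y, hy, hxy⟩
  rw [hxy]
  exact J.mul_mem_left x hy

theorem purePart_le_s10 (J : Ideal A) : J.purePart ≤ J :=
  sSup_le fun _ hK => hK.2

theorem unitPart_le_purePart (hA : IsGelfandRing A) (J : Ideal A) : J.unitPart ≤ J.purePart :=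
  le_sSup ⟨unitPart_isPure hA J, unitPart_le_s10 J⟩

end Ideal

/-- A pure ideal `I` of a Gelfand ring satisfies `I = Σ_{f ∈ I} ν(Af)`. -/
theorem pure_ideal_eq_iSup_purePart_span_of_gelfand (hA : IsGelfandRing A)
    (I : Ideal A) (hI : I.IsPure) :
    I = ⨆ f ∈ I, (Ideal.span {f}).purePart := by
  refine le_antisymm (fun f hf => ?_) (iSup₂_le fun f hf => ?_)
  · obtain ⟨g, hg, hfg⟩ := hI f hf
    have hf_unit : f ∈ (Ideal.span {g}).unitPart :=
      ⟨g, Ideal.mem_span_singleton_self g, by linear_combination hfg⟩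
    exact Ideal.mem_iSup_of_mem g <| Ideal.mem_iSup_of_mem hg <|
      Ideal.unitPart_le_purePart hA _ hf_unit
  · exact (Ideal.purePart_le_s10 _).trans ((Ideal.span_singleton_le_iff_mem I).mpr hf)
end

section
/- For a commutative ring A, the following statements are equivalent: (i) A is a Gelfand ring; (ii) for every ideal I of A and every maximal ideal m of A, if u(I) ⊆ m then I ⊆ m; (iii) for every pair of distinct maximal ideals m and m' of A, u(m) + u(m') = A; (iv) if I and J are ideals of A with I + J = A, then u(I) + u(J) = A; (v) for every family (I_k) of ideals of A, u(Σ_k I_k) = Σ_k u(I_k); (vi) for every ideal I of A and every maximal ideal m of A, I ⊆ m if and only if u(I) ⊆ m; (vii) for every ideal I of A, Rad(I) = Rad(u(I)). -/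
variable {A : Type*} [CommRing A]

/-!
If `I ⊔ J = ⊤` in a Gelfand ring, then `a * b = 0` for some `a ∈ 1 + I`, `b ∈ 1 + J`: otherwise a
prime `p` avoids `(1 + I)(1 + J)`, so `p ⊔ I` and `p ⊔ J` are proper, and the maximal ideals above
them coincide, being the unique one above `p`; it would then contain `I ⊔ J`.
For `I ⊄ m` and `J = m` this gives `b ∉ m` with `b (1 - (1 - a)) = 0`, that is `b ∈ u(I)`.

Conversely, `u(n) ≤ p` whenever the prime `p` lies in a proper ideal `n`, since `f (1 - g) = 0` with
`g ∈ n` forces `f ∈ p`; so `u(m) + u(m') = A` forbids two distinct maximal ideals above `p`.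
-/

namespace Ideal

theorem mem_unitPart_iff {I : Ideal A} {f : A} :
    f ∈ I.unitPart ↔ ∃ g ∈ I, f * (1 - g) = 0 := by
  refine exists_congr fun g => and_congr_right fun _ => ?_
  rw [mul_sub, mul_one, sub_eq_zero, eq_comm]

@[simp]
theorem unitPart_top : (⊤ : Ideal A).unitPart = ⊤ :=
  (eq_top_iff_one _).mpr ⟨1, trivial, (one_mul 1).symm⟩

theorem unitPart_le_of_isPrime {p n : Ideal A} (hp : p.IsPrime) (hn : n ≠ ⊤) (hpn : p ≤ n) :
    n.unitPart ≤ p := by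
  intro f hf
  obtain ⟨g, hg, hfg⟩ := mem_unitPart_iff.mp hf
  refine (hp.mem_or_mem (hfg ▸ p.zero_mem)).resolve_right fun h1g => hn ?_
  exact (eq_top_iff_one n).mpr (by simpa using n.add_mem (hpn h1g) hg)

theorem mem_of_mul_eq_zero_of_sup_span_eq_top {J : Ideal A} {f b : A}
    (hJ : span {b} ⊔ J = ⊤) (hfb : f * b = 0) : f ∈ J := by
  obtain ⟨c, j, hj, hcj⟩ := mem_span_singleton_sup.mp ((eq_top_iff_one _).mp hJ)
  have hf : f = c * (f * b) + f * j := by linear_combination -f * hcj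
  rw [hf, hfb, mul_zero, zero_add]
  exact J.mul_mem_left f hj

def oneAddSubmonoid (I : Ideal A) : Submonoid A where
  carrier := {a | a - 1 ∈ I}
  one_mem' := by simp
  mul_mem' {a b} ha hb := by
    have : a * b - 1 = a * (b - 1) + (a - 1) := by ring
    simpa only [Set.mem_ofPred_eq, this] using I.add_mem (I.mul_mem_left a hb) ha

theorem mem_oneAddSubmonoid {I : Ideal A} {a : A} : a ∈ I.oneAddSubmonoid ↔ a - 1 ∈ I :=
  Iff.rfl

theorem sup_ne_top_of_disjoint_oneAddSubmonoid {p I : Ideal A}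
    (hp : Disjoint (p : Set A) I.oneAddSubmonoid) : p ⊔ I ≠ ⊤ := by
  intro htop
  obtain ⟨q, hq, x, hx, hqx⟩ := Submodule.mem_sup.mp ((eq_top_iff_one _).mp htop)
  refine Set.disjoint_left.mp hp hq (mem_oneAddSubmonoid.mpr ?_)
  simpa [← hqx] using I.neg_mem hx

theorem unitPart_iSup_eq (h : ∀ I m : Ideal A, m.IsMaximal → I.unitPart ≤ m → I ≤ m)
    {ι : Sort*} (I : ι → Ideal A) : (⨆ k, I k).unitPart = ⨆ k, (I k).unitPart := by
  refine le_antisymm (fun f hf => ?_) (iSup_le fun k => unitPart_mono (le_iSup I k))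
  obtain ⟨g, hg, hfg⟩ := mem_unitPart_iff.mp hf
  refine mem_of_mul_eq_zero_of_sup_span_eq_top (not_ne_iff.mp fun hne => ?_) hfg
  obtain ⟨m, hm, hle⟩ := exists_le_maximal _ hne
  have hIm : ⨆ k, I k ≤ m := iSup_le fun k =>
    h _ m hm ((le_iSup (fun k => (I k).unitPart) k).trans (le_sup_right.trans hle))
  have h1g : 1 - g ∈ m := hle (le_sup_left (a := span {1 - g}) (mem_span_singleton_self _))
  exact hm.ne_top ((eq_top_iff_one m).mpr (by simpa using m.add_mem h1g (hIm hg)))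

end Ideal

open Ideal

theorem IsGelfandRing.sup_ne_top {p I J : Ideal A} (h : IsGelfandRing A) (hp : p.IsPrime)
    (hI : p ⊔ I ≠ ⊤) (hJ : p ⊔ J ≠ ⊤) : I ⊔ J ≠ ⊤ := by
  obtain ⟨m, hm, hIm⟩ := exists_le_maximal _ hI
  obtain ⟨n, hn, hJn⟩ := exists_le_maximal _ hJ
  have hmn : m = n := (h p hp).unique ⟨hm, le_sup_left.trans hIm⟩ ⟨hn, le_sup_left.trans hJn⟩
  exact ne_top_of_le_ne_top hm.ne_top
    (sup_le (le_sup_right.trans hIm) (hmn ▸ le_sup_right.trans hJn))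

theorem IsGelfandRing.exists_mul_eq_zero {I J : Ideal A} (h : IsGelfandRing A)
    (hIJ : I ⊔ J = ⊤) : ∃ a b : A, a - 1 ∈ I ∧ b - 1 ∈ J ∧ a * b = 0 := by
  by_contra hne
  have hdisj :
      Disjoint ((⊥ : Ideal A) : Set A) ↑(I.oneAddSubmonoid ⊔ J.oneAddSubmonoid) := by
    refine Set.disjoint_right.mpr fun x hx hx0 => hne ?_
    obtain ⟨a, ha, b, hb, rfl⟩ := Submonoid.mem_sup.mp hx
    exact ⟨a, b, ha, hb, hx0⟩
  obtain ⟨p, hp, -, hpS⟩ := exists_le_prime_disjoint ⊥ _ hdisj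
  exact h.sup_ne_top hp
    (sup_ne_top_of_disjoint_oneAddSubmonoid (hpS.mono_right (SetLike.coe_mono le_sup_left)))
    (sup_ne_top_of_disjoint_oneAddSubmonoid (hpS.mono_right (SetLike.coe_mono le_sup_right)))
    hIJ

theorem IsGelfandRing.le_of_unitPart_le {I m : Ideal A} (h : IsGelfandRing A)
    (hm : m.IsMaximal) (hIm : I.unitPart ≤ m) : I ≤ m := by
  by_contra hI
  have hIm_top : I ⊔ m = ⊤ := not_ne_iff.mp fun hne =>
    hI (le_sup_left.trans_eq (hm.eq_of_le hne le_sup_right).symm)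
  obtain ⟨a, b, ha, hb, hab⟩ := h.exists_mul_eq_zero hIm_top
  have hbI : b ∈ I.unitPart := mem_unitPart_iff.mpr
    ⟨1 - a, by simpa using I.neg_mem ha, by rw [sub_sub_cancel, mul_comm, hab]⟩
  exact hm.ne_top ((eq_top_iff_one m).mpr (by simpa using m.sub_mem (hIm hbI) hb))

theorem isGelfandRing_of_unitPart_sup_eq_top
    (h : ∀ m m' : Ideal A, m.IsMaximal → m'.IsMaximal → m ≠ m' → m.unitPart ⊔ m'.unitPart = ⊤) :
    IsGelfandRing A := by
  intro p hp
  obtain ⟨m, hm, hpm⟩ := exists_le_maximal p hp.ne_top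
  refine ⟨m, ⟨hm, hpm⟩, fun m' ⟨hm', hpm'⟩ => not_ne_iff.mp fun hne => hp.ne_top ?_⟩
  exact top_le_iff.mp (h m' m hm' hm hne ▸
    sup_le (unitPart_le_of_isPrime hp hm'.ne_top hpm') (unitPart_le_of_isPrime hp hm.ne_top hpm))

universe u

/-- unit part characterization of Gelfand rings. -/
theorem gelfand_tfae_unitPart (A : Type u) [CommRing A] :
    List.TFAE
      [ IsGelfandRing A,
        ∀ I m : Ideal A, m.IsMaximal → I.unitPart ≤ m → I ≤ m,
        ∀ m m' : Ideal A, m.IsMaximal → m'.IsMaximal → m ≠ m' →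
          m.unitPart + m'.unitPart = ⊤,
        ∀ I J : Ideal A, I + J = ⊤ → I.unitPart + J.unitPart = ⊤,
        ∀ (ι : Type u) (I : ι → Ideal A),
          (⨆ k, I k).unitPart = ⨆ k, (I k).unitPart,
        ∀ I m : Ideal A, m.IsMaximal → (I ≤ m ↔ I.unitPart ≤ m),
        ∀ I : Ideal A, I.jacobson = I.unitPart.jacobson ] := by
  tfae_have 1 → 2 := fun h _ _ hm => h.le_of_unitPart_le hm
  tfae_have 2 → 6 := fun h I m hm => ⟨(I.unitPart_le).trans, h I m hm⟩
  tfae_have 6 → 7 := fun h I => congrArg sInf (Set.ext fun m => and_congr_left (h I m))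
  tfae_have 7 → 2 := fun h I m hm hIm =>
    le_jacobson.trans ((h I).trans_le (sInf_le ⟨hIm, hm⟩))
  tfae_have 2 → 5 := fun h _ => unitPart_iSup_eq h
  tfae_have 5 → 4 := by
    intro h I J hIJ
    have hsup := h (ULift Bool) fun b => cond b.down I J
    simp only [iSup_ulift, iSup_bool_eq, cond_true, cond_false] at hsup
    rw [Submodule.add_eq_sup] at hIJ ⊢
    rw [← hsup, hIJ, unitPart_top]
  tfae_have 4 → 3 := fun h m m' hm hm' hne => h m m' (hm.coprime_of_ne hm' hne)
  tfae_have 3 → 1 := isGelfandRing_of_unitPart_sup_eq_top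
  tfae_finish
end

section
/- Let I be an ideal of a commutative ring A. Then u(I) = ⋂ u(m), the intersection being taken over all maximal ideals m of A containing I. -/
/-! Since `f = f * g` means `1 - g ∈ Ann(f)`, `f ∈ u(I)` exactly when `I + Ann(f) = A`.
An ideal is all of `A` iff no maximal ideal contains it, and a maximal `m ⊇ I` contains
`I + Ann(f)` iff `m + Ann(f) ≠ A`, i.e. iff `f ∉ u(m)`. -/

variable {A : Type*} [CommRing A]

namespace Ideal

theorem mem_unitPart {I : Ideal A} {f : A} : f ∈ I.unitPart ↔ ∃ g ∈ I, f = f * g :=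
  Iff.rfl

theorem mem_unitPart_iff_sup_torsionOf_eq_top {I : Ideal A} {f : A} :
    f ∈ I.unitPart ↔ I ⊔ torsionOf A A f = ⊤ := by
  rw [mem_unitPart, eq_top_iff_one, Submodule.mem_sup]
  constructor
  · rintro ⟨g, hg, hfg⟩
    refine ⟨g, hg, 1 - g, ?_, by ring⟩
    rw [mem_torsionOf_iff, smul_eq_mul]
    linear_combination hfg
  · rintro ⟨g, hg, b, hb, hgb⟩
    rw [mem_torsionOf_iff, smul_eq_mul] at hb
    exact ⟨g, hg, by linear_combination -f * hgb + hb⟩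

theorem sup_eq_top_of_forall_isMaximal {I J : Ideal A}
    (h : ∀ m : Ideal A, m.IsMaximal → I ≤ m → m ⊔ J = ⊤) : I ⊔ J = ⊤ := by
  by_contra hne
  obtain ⟨m, hm, hIJm⟩ := exists_le_maximal _ hne
  have hmJ : m ⊔ J = m := sup_eq_left.mpr (le_sup_right.trans hIJm)
  exact hm.ne_top (hmJ ▸ h m hm (le_sup_left.trans hIJm))

end Ideal

/-- `u(I)` is the intersection of the `u(m)` over all maximal ideals
`m` containing `I`. -/
theorem unitPart_eq_iInf_unitPart_maximal (I : Ideal A) :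
    I.unitPart = ⨅ (m : Ideal A) (_ : m.IsMaximal ∧ I ≤ m), m.unitPart := by
  refine le_antisymm (le_iInf₂ fun m hm => Ideal.unitPart_mono hm.2) fun f hf => ?_
  simp only [Submodule.mem_iInf] at hf
  rw [Ideal.mem_unitPart_iff_sup_torsionOf_eq_top]
  exact Ideal.sup_eq_top_of_forall_isMaximal fun m hm hIm =>
    Ideal.mem_unitPart_iff_sup_torsionOf_eq_top.mp (hf m ⟨hm, hIm⟩)
end

section
/- Let I and J be pure ideals of a commutative ring A such that √I = √J. Then I = J. -/
variable {A : Type*} [CommRing A]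

theorem mul_pow_eq_self_of_mul_one_sub_eq_zero {R : Type*} [Ring R] {f g : R}
    (h : f * (1 - g) = 0) (n : ℕ) : f * g ^ n = f := by
  have hfg : f * g = f := by rw [mul_sub, mul_one, sub_eq_zero] at h; exact h.symm
  induction n with
  | zero => rw [pow_zero, mul_one]
  | succ n ih => rw [pow_succ, ← mul_assoc, ih, hfg]

theorem Ideal.IsPure.le_of_radical_le {I J : Ideal A} (hI : I.IsPure)
    (h : I.radical ≤ J.radical) : I ≤ J := by
  intro f hf
  obtain ⟨g, hg, hfg⟩ := hI f hf
  obtain ⟨n, hgn⟩ := h (Ideal.le_radical hg)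
  rw [← mul_pow_eq_self_of_mul_one_sub_eq_zero hfg n]
  exact J.mul_mem_left f hgn

/-- Pure ideals with the same radical are equal. -/
theorem pure_ideal_eq_of_radical_eq (I J : Ideal A)
    (hI : I.IsPure) (hJ : J.IsPure) (h : I.radical = J.radical) : I = J :=
  le_antisymm (hI.le_of_radical_le h.le) (hJ.le_of_radical_le h.ge)
end

section
/- Let A be a commutative ring. Then A is an mp-ring if and only if p = √(ν(p)) for every minimal prime ideal p of A. -/
/-!
If `A` is an mp-ring and `p` is a minimal prime, every prime `q` containing the unit part `u(p)`
contains `p`: otherwise the minimal prime `q₀` below `q` is comaximal with `p`, say `1 = u + v`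
with `u ∈ p`, `v ∈ q₀`, and since `q₀` is the only minimal prime in `q` some `w ∉ q` kills a power
`v ^ k`; then `w = w (1 - v ^ k)` with `1 - v ^ k ∈ p`, so `w ∈ u(p) ⊆ q`. Hence `p = √u(p)`, which
also makes `u(p)` pure, so `p = √ν(p)`. Conversely a pure ideal inside a proper ideal `q` lies in
every prime below `q`, so if `r` and `q₀` are minimal primes below `q` then
`r = √ν(r) ⊆ q₀`, forcing `r = q₀`.
-/

variable {A : Type*} [CommRing A]

namespace Ideal

theorem IsPure.le_purePart_s14 {I J : Ideal A} (hJ : J.IsPure) (hJI : J ≤ I) : J ≤ I.purePart :=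
  le_sSup ⟨hJ, hJI⟩

theorem IsPure.le_of_le {J q q' : Ideal A} (hJ : J.IsPure) (hq : q ≠ ⊤) [q'.IsPrime]
    (hq'q : q' ≤ q) (hJq : J ≤ q) : J ≤ q' := by
  intro f hf
  obtain ⟨g, hg, hfg⟩ := hJ f hf
  refine (‹q'.IsPrime›.mem_or_mem (hfg ▸ q'.zero_mem : f * (1 - g) ∈ q')).resolve_right ?_
  intro h1g
  exact hq ((eq_top_iff_one q).mpr (by simpa using q.add_mem (hq'q h1g) (hJq hg)))

theorem purePart_le_of_le {I q q' : Ideal A} (hq : q ≠ ⊤) [q'.IsPrime] (hq'q : q' ≤ q)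
    (hIq : I ≤ q) : I.purePart ≤ q' :=
  sSup_le fun _ ⟨hJ, hJI⟩ => hJ.le_of_le hq hq'q (hJI.trans hIq)

/-- `v` becomes nilpotent in the localization at `q`. -/
theorem IsPrime.exists_notMem_mul_pow_eq_zero {q : Ideal A} (hq : q.IsPrime) {v : A}
    (hv : ∀ p ∈ minimalPrimes A, p ≤ q → v ∈ p) : ∃ w ∉ q, ∃ k : ℕ, w * v ^ k = 0 := by
  by_contra! h
  let S : Submonoid A := q.primeCompl ⊔ Submonoid.powers v
  have h0 : Disjoint ((⊥ : Ideal A) : Set A) S := by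
    rw [Submodule.bot_coe, Set.disjoint_singleton_left]
    intro h0
    obtain ⟨w, hw, _, ⟨k, rfl⟩, hwk⟩ := Submonoid.mem_sup.mp h0
    exact h w hw k hwk
  obtain ⟨q', hq', -, hq'S⟩ := exists_le_prime_disjoint ⊥ S h0
  have hq'q : q' ≤ q := fun x hx => by
    by_contra hxq
    exact Set.disjoint_left.mp hq'S hx (Submonoid.mem_sup_left hxq)
  obtain ⟨p, hp, hpq'⟩ := exists_minimalPrimes_le (bot_le : ⊥ ≤ q')
  exact Set.disjoint_left.mp hq'S (hpq' (hv p hp (hpq'.trans hq'q)))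
    (Submonoid.mem_sup_right (Submonoid.mem_powers v))

end Ideal

namespace IsMpRing

variable (hA : IsMpRing A)
include hA

theorem eq_of_le {q p p' : Ideal A} (hq : q.IsPrime) (hp : p ∈ minimalPrimes A)
    (hp' : p' ∈ minimalPrimes A) (hpq : p ≤ q) (hp'q : p' ≤ q) : p = p' :=
  (hA q hq).unique ⟨hp, hpq⟩ ⟨hp', hp'q⟩

theorem sup_eq_top {p p' : Ideal A} (hp : p ∈ minimalPrimes A) (hp' : p' ∈ minimalPrimes A)
    (hne : p ≠ p') : p ⊔ p' = ⊤ := by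
  by_contra h
  obtain ⟨m, hm, hle⟩ := Ideal.exists_le_maximal _ h
  exact hne (hA.eq_of_le hm.isPrime hp hp' (le_sup_left.trans hle) (le_sup_right.trans hle))

theorem le_of_unitPart_le {p q : Ideal A} (hp : p ∈ minimalPrimes A) (hq : q.IsPrime)
    (hpq : p.unitPart ≤ q) : p ≤ q := by
  obtain ⟨q₀, hq₀, hq₀q⟩ := Ideal.exists_minimalPrimes_le (bot_le : ⊥ ≤ q)
  obtain rfl | hne := eq_or_ne p q₀
  · exact hq₀q
  obtain ⟨u, hu, v, hv, huv⟩ :=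
    Submodule.mem_sup.mp ((hA.sup_eq_top hp hq₀ hne).symm ▸ Submodule.mem_top : (1 : A) ∈ p ⊔ q₀)
  obtain ⟨w, hwq, k, hwv⟩ := hq.exists_notMem_mul_pow_eq_zero fun p' hp' hp'q =>
    hA.eq_of_le hq hq₀ hp' hq₀q hp'q ▸ hv
  have hvk : 1 - v ^ k ∈ p := by
    obtain ⟨c, hc⟩ := sub_dvd_pow_sub_pow (1 : A) v k
    rw [one_pow] at hc
    rw [hc, show 1 - v = u by linear_combination -huv]
    exact p.mul_mem_right c hu
  exact absurd (hpq ⟨1 - v ^ k, hvk, by linear_combination hwv⟩) hwq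

theorem le_radical_unitPart {p : Ideal A} (hp : p ∈ minimalPrimes A) :
    p ≤ p.unitPart.radical := by
  rw [Ideal.radical_eq_sInf]
  exact le_sInf fun q hq => hA.le_of_unitPart_le hp hq.2 hq.1

theorem isPure_unitPart {p : Ideal A} (hp : p ∈ minimalPrimes A) : p.unitPart.IsPure := by
  rintro f ⟨g, hg, hfg⟩
  obtain ⟨n, hn⟩ := hA.le_radical_unitPart hp hg
  have hfgn (m : ℕ) : f = f * g ^ m := by
    induction m with
    | zero => simp
    | succ m ih => rw [pow_succ, ← mul_assoc, ← ih, ← hfg]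
  exact ⟨g ^ n, hn, by linear_combination hfgn n⟩

end IsMpRing

/-- `A` is an mp-ring iff `p = √(ν(p))` for every minimal prime `p`. -/
theorem isMpRing_iff_minimalPrimes_eq_radical_purePart :
    IsMpRing A ↔ ∀ p ∈ minimalPrimes A, p = p.purePart.radical := by
  constructor
  · intro hA p hp
    refine le_antisymm ?_ ?_
    · exact (hA.le_radical_unitPart hp).trans
        (Ideal.radical_mono ((hA.isPure_unitPart hp).le_purePart_s14 p.unitPart_le))
    · exact (Ideal.radical_mono p.purePart_le).trans_eq hp.1.1.radical
  · intro h q hq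
    obtain ⟨q₀, hq₀, hq₀q⟩ := Ideal.exists_minimalPrimes_le (bot_le : ⊥ ≤ q)
    have hq₀prime : q₀.IsPrime := hq₀.1.1
    refine ⟨q₀, ⟨hq₀, hq₀q⟩, fun r ⟨hr, hrq⟩ => ?_⟩
    have hrq₀ : r ≤ q₀ := by
      rw [h r hr, ← hq₀prime.radical]
      exact Ideal.radical_mono (Ideal.purePart_le_of_le hq.ne_top hq₀q hrq)
    exact le_antisymm hrq₀ (hq₀.2 ⟨hr.1.1, bot_le⟩ hrq₀)
end

section
/- Let A be a reduced mp-ring. Then the purely-maximal ideals of A are precisely the minimal prime ideals of A; that is, an ideal of A is purely-maximal if and only if it is a minimal prime ideal. -/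
variable {A : Type*} [CommRing A]

/-!
In an mp-ring a prime `p` lies over a unique minimal prime `q`, so every prime of `A_p` contains
the image of `q`; when `A` is reduced this forces `q` to vanish in `A_p`. Taking `p` maximal, the
annihilator of any `f ∈ q` lies in no maximal ideal containing `q`, i.e. `ann f + q = A`, which is
purity of `q`. On the other hand a pure ideal `J` lies in every prime `q` with `J + q ≠ A`: from
`f (1 - g) = 0` with `g ∈ J`, the factor `1 - g` cannot be in `q`. So every proper pure ideal lies
in a minimal prime (one below a maximal ideal containing it), and minimal primes are pure.
-/

namespace Ideal

theorem IsPure.le_of_sup_ne_top {J q : Ideal A} (hJ : J.IsPure) [q.IsPrime]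
    (hJq : J ⊔ q ≠ ⊤) : J ≤ q := by
  intro f hf
  obtain ⟨g, hg, hfg⟩ := hJ f hf
  refine (IsPrime.mem_or_mem ‹_› (show f * (1 - g) ∈ q from hfg ▸ q.zero_mem)).resolve_right
    fun hg' => hJq ((eq_top_iff_one _).mpr ?_)
  simpa using add_mem (mem_sup_right hg') (mem_sup_left hg)

theorem isPure_of_annihilator_sup_eq_top {I : Ideal A}
    (h : ∀ f ∈ I, (span {f}).annihilator ⊔ I = ⊤) : I.IsPure := by
  intro f hf
  obtain ⟨x, hx, g, hg, hxg⟩ := Submodule.mem_sup.mp ((eq_top_iff_one _).mp (h f hf))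
  refine ⟨g, hg, ?_⟩
  rw [← hxg, add_sub_cancel_right, mul_comm]
  exact (Submodule.mem_annihilator_span_singleton _ _).mp hx

end Ideal

namespace IsMpRing

open Ideal

theorem le_kerPi [IsReduced A] (hA : IsMpRing A) {p q : Ideal A} (hp : p.IsPrime)
    (hq : q ∈ minimalPrimes A) (hqp : q ≤ p) : q ≤ p.kerPi hp := by
  intro a ha
  suffices IsNilpotent (algebraMap A (Localization.AtPrime p) a) from this.eq_zero
  rw [← mem_nilradical, nilradical_eq_sInf, mem_sInf]
  intro P (hP : P.IsPrime)
  have hPp : P.comap (algebraMap A (Localization.AtPrime p)) ≤ p := fun x hx =>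
    (IsLocalization.AtPrime.to_map_mem_maximal_iff _ p x).mp
      (IsLocalRing.le_maximalIdeal hP.ne_top hx)
  obtain ⟨q', hq', hq'P⟩ := exists_minimalPrimes_le
    (bot_le : ⊥ ≤ P.comap (algebraMap A (Localization.AtPrime p)))
  have : q' = q := (hA p hp).unique ⟨hq', hq'P.trans hPp⟩ ⟨hq, hqp⟩
  exact hq'P (this ▸ ha)

theorem isPure_of_mem_minimalPrimes [IsReduced A] (hA : IsMpRing A) {q : Ideal A}
    (hq : q ∈ minimalPrimes A) : q.IsPure := by
  refine isPure_of_annihilator_sup_eq_top fun f hf => ?_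
  by_contra hne
  obtain ⟨m, hm, hle⟩ := exists_le_maximal _ hne
  have hf0 : algebraMap A (Localization.AtPrime m) f = 0 :=
    hA.le_kerPi hm.isPrime hq (le_sup_right.trans hle) hf
  obtain ⟨⟨s, hsm⟩, hsf⟩ := (IsLocalization.map_eq_zero_iff m.primeCompl _ f).mp hf0
  exact hsm (hle (mem_sup_left ((Submodule.mem_annihilator_span_singleton _ _).mpr hsf)))

end IsMpRing

/-- In a reduced mp-ring, the purely-maximal ideals are precisely the
minimal primes. -/
theorem purelyMaximal_iff_minimalPrime_of_reduced_mp [IsReduced A] (hA : IsMpRing A) :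
    ∀ I : Ideal A, I.IsPurelyMaximal ↔ I ∈ minimalPrimes A := by
  intro I
  constructor
  · rintro ⟨hI, hI_ne_top, hI_max⟩
    obtain ⟨m, hm, hIm⟩ := Ideal.exists_le_maximal I hI_ne_top
    obtain ⟨q, hq, hqm⟩ := Ideal.exists_minimalPrimes_le (bot_le : ⊥ ≤ m)
    have : q.IsPrime := hq.1.1
    have hIq : I ≤ q := hI.le_of_sup_ne_top (ne_top_of_le_ne_top hm.ne_top (sup_le hIm hqm))
    exact hI_max q (hA.isPure_of_mem_minimalPrimes hq) this.ne_top hIq ▸ hq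
  · intro hI
    have : I.IsPrime := hI.1.1
    refine ⟨hA.isPure_of_mem_minimalPrimes hI, this.ne_top, fun Q hQ hQ_ne_top hIQ =>
      le_antisymm hIQ (hQ.le_of_sup_ne_top ?_)⟩
    rwa [sup_eq_left.mpr hIQ]
end

section
/- Let A be a reduced mp-ring. Then every purely-prime ideal of A is purely-maximal. -/
/-!
In a reduced mp-ring, `a * b = 0` forces `Ann a + Ann b = A`: otherwise both annihilators lie in a
maximal ideal `m`, and whichever of `a`, `b` lies in the unique minimal prime below `m` would have to
avoid some minimal prime below `m`. Hence annihilators are pure. Given a purely-prime `P` and a proper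
pure `Q ⊇ P`, each `f ∈ Q` has `f * (1 - g) = 0` for some `g ∈ Q`; as `Ann (1 - g) * Ann g = 0`,
either `f ∈ Ann (1 - g) ≤ P` or `Ann g ≤ P ≤ Q`, and the latter is impossible for a proper pure `Q`.
-/

variable {A : Type*} [CommRing A]

theorem mem_annihilator_span_singleton_iff {a r : A} : r ∈ (A ∙ a).annihilator ↔ r * a = 0 :=
  Submodule.mem_annihilator_span_singleton a r

theorem annihilator_mul_annihilator_one_sub (a : A) :
    (A ∙ a).annihilator * (A ∙ (1 - a)).annihilator = ⊥ := by
  refine eq_bot_iff.mpr (Ideal.mul_le_inf.trans fun x ⟨hxa, hxb⟩ => ?_)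
  rw [SetLike.mem_coe, mem_annihilator_span_singleton_iff] at hxa hxb
  rw [Ideal.mem_bot]
  linear_combination hxa + hxb

theorem Ideal.IsPure.annihilator_not_le {Q : Ideal A} (hQ : Q.IsPure) (hQ_ne_top : Q ≠ ⊤)
    {g : A} (hg : g ∈ Q) : ¬(A ∙ g).annihilator ≤ Q := by
  intro hle
  obtain ⟨h, hh, hgh⟩ := hQ g hg
  have h_one_sub : 1 - h ∈ Q :=
    hle (mem_annihilator_span_singleton_iff.mpr (by linear_combination hgh))
  exact hQ_ne_top ((Ideal.eq_top_iff_one Q).mpr (by simpa using Q.add_mem h_one_sub hh))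

/-- In a reduced ring, the primes below `m` avoiding `a` are those disjoint from the submonoid
generated by `a` and `A \ m`; it avoids `0` because `s * a ^ n = 0` forces `s * a = 0`. -/
theorem exists_minimalPrimes_le_notMem_of_annihilator_le [IsReduced A] {m : Ideal A}
    [m.IsPrime] {a : A} (h : (A ∙ a).annihilator ≤ m) :
    ∃ q ∈ minimalPrimes A, q ≤ m ∧ a ∉ q := by
  set S := Submonoid.powers a ⊔ m.primeCompl
  have hS : Disjoint ((⊥ : Ideal A) : Set A) S := by
    refine Set.disjoint_right.mpr fun x hx hx0 => ?_
    obtain ⟨_, ⟨n, rfl⟩, s, hs, rfl⟩ := Submonoid.mem_sup.mp hx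
    have hsa_pow : (s * a) ^ (n + 1) = 0 := by
      rw [SetLike.mem_coe, Ideal.mem_bot] at hx0
      linear_combination (s ^ n * a) * hx0
    exact hs (h (mem_annihilator_span_singleton_iff.mpr (IsReduced.eq_zero _ ⟨_, hsa_pow⟩)))
  obtain ⟨p, hp, -, hpS⟩ := Ideal.exists_le_prime_disjoint ⊥ S hS
  have hpm : p ≤ m := fun x hxp => by_contra fun hxm =>
    Set.disjoint_left.mp hpS hxp (Submonoid.mem_sup_right (show x ∈ m.primeCompl from hxm))
  have hap : a ∉ p := fun hap =>
    Set.disjoint_left.mp hpS hap (Submonoid.mem_sup_left (Submonoid.mem_powers a))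
  obtain ⟨q, hq, hqp⟩ := Ideal.exists_minimalPrimes_le (bot_le : ⊥ ≤ p)
  exact ⟨q, hq, hqp.trans hpm, fun haq => hap (hqp haq)⟩

theorem IsMpRing.annihilator_sup_annihilator_eq_top [IsReduced A] (hA : IsMpRing A) {a b : A}
    (hab : a * b = 0) : (A ∙ a).annihilator ⊔ (A ∙ b).annihilator = ⊤ := by
  by_contra hne
  obtain ⟨m, hm, hle⟩ := Ideal.exists_le_maximal _ hne
  obtain ⟨q, ⟨hq, hqm⟩, hq_unique⟩ := hA m hm.isPrime
  have key : ∀ c ∈ q, ¬(A ∙ c).annihilator ≤ m := fun c hcq hc => by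
    obtain ⟨q', hq', hq'm, hcq'⟩ := exists_minimalPrimes_le_notMem_of_annihilator_le hc
    exact hcq' (hq_unique q' ⟨hq', hq'm⟩ ▸ hcq)
  rcases hq.1.1.mem_or_mem (show a * b ∈ q from hab ▸ q.zero_mem) with ha | hb
  · exact key a ha (le_sup_left.trans hle)
  · exact key b hb (le_sup_right.trans hle)

theorem IsMpRing.isPure_annihilator [IsReduced A] (hA : IsMpRing A) (a : A) :
    (A ∙ a).annihilator.IsPure := by
  intro f hf
  have hone : (1 : A) ∈ (A ∙ f).annihilator ⊔ (A ∙ a).annihilator := by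
    rw [hA.annihilator_sup_annihilator_eq_top (mem_annihilator_span_singleton_iff.mp hf)]
    trivial
  obtain ⟨x, hx, y, hy, hxy⟩ := Submodule.mem_sup.mp hone
  refine ⟨y, hy, ?_⟩
  linear_combination (mem_annihilator_span_singleton_iff.mp hx) - f * hxy

/-- In a reduced mp-ring, every purely-prime ideal is purely-maximal. -/
theorem purelyPrime_isPurelyMaximal_of_reduced_mp [IsReduced A] (hA : IsMpRing A)
    (P : Ideal A) (hP : P.IsPurelyPrime) : P.IsPurelyMaximal := by
  obtain ⟨hP_pure, hP_ne_top, hP_prime⟩ := hP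
  refine ⟨hP_pure, hP_ne_top, fun Q hQ hQ_ne_top hPQ => le_antisymm hPQ fun f hf => ?_⟩
  obtain ⟨g, hg, hfg⟩ := hQ f hf
  have hprod : (A ∙ (1 - g)).annihilator * (A ∙ g).annihilator ≤ P := by
    rw [mul_comm, annihilator_mul_annihilator_one_sub]
    exact bot_le
  rcases hP_prime _ _ (hA.isPure_annihilator _) (hA.isPure_annihilator _) hprod with h | h
  · exact h (mem_annihilator_span_singleton_iff.mpr (by linear_combination hfg))
  · exact absurd (h.trans hPQ) (hQ.annihilator_not_le hQ_ne_top hg)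
end
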